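/- On a weak para-S-manifold, every ξ_i is a Killing vector field, ker f is integrable, and both ker f and its orthogonal complement f(TM) are totally geodesic distributions; thus ker f defines a Riemannian totally geodesic foliation. -/

import Mathlib

open scoped BigOperators

noncomputable section

variable (C V : Type*) [CommRing C] [Algebra ℝ C] [AddCommGroup V]
  [Module ℝ V] [Module C V] [IsScalarTower ℝ C V]

/-- A metric weak para-f-structure on a manifold, modelled algebraically:
`C` plays the role of the ring of smooth functions, `V` the `C`-module of vector fields
with Lie bracket `b` and derivation action `act` of vector fields on functions,
`g` is a compatible pseudo-Riemannian metric (with `f` of rank `2n`, encoded by `hrank`)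
and `nabla` its Levi-Civita connection (torsion-free and metric). -/
structure MWPF (p : ℕ) where
  f : V →ₗ[C] V
  Q : V →ₗ[C] V
  ξ : Fin p → V
  η : Fin p → V →ₗ[C] C
  g : V →ₗ[C] V →ₗ[C] C
  b : V → V → V
  act : V → C → C
  nabla : V → V → V
  hQbij : Function.Bijective Q
  hf2 : ∀ X, f (f X) = Q X - ∑ i, η i X • ξ i
  hf3 : ∀ X, f (f (f X)) = f (Q X)
  hetaxi : ∀ i j, η i (ξ j) = if i = j then (1 : C) else 0
  hQxi : ∀ i, Q (ξ i) = ξ i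
  hrange : ∀ X : V, X ∈ LinearMap.range f ↔ ∀ i, η i X = 0
  hgsymm : ∀ X Y, g X Y = g Y X
  hgnondeg : ∀ X, (∀ Y, g X Y = 0) → X = 0
  hrank : ∀ Z, (∀ i, η i Z = 0) → (∀ Y, g Z (f Y) = 0) → Z = 0
  hgcompat : ∀ X Y, g (f X) (f Y) = -(g X (Q Y)) + ∑ i, η i X * η i Y
  hbskew : ∀ X Y, b X Y = - b Y X
  hbaddl : ∀ X Y Z, b (X + Y) Z = b X Z + b Y Z
  hjacobi : ∀ X Y Z, b X (b Y Z) + b Y (b Z X) + b Z (b X Y) = 0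
  hactadd : ∀ X a c, act X (a + c) = act X a + act X c
  hactmul : ∀ X a c, act X (a * c) = act X a * c + a * act X c
  hactX : ∀ (a : C) X Y c, act (a • X + Y) c = a * act X c + act Y c
  hbleib : ∀ X (a : C) Y, b X (a • Y) = act X a • Y + a • b X Y
  hnab1 : ∀ (a : C) X X' Y, nabla (a • X + X') Y = a • nabla X Y + nabla X' Y
  hnabadd : ∀ X Y Z, nabla X (Y + Z) = nabla X Y + nabla X Z
  hnableib : ∀ X (a : C) Y, nabla X (a • Y) = act X a • Y + a • nabla X Y
  htors : ∀ X Y, nabla X Y - nabla Y X = b X Y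
  hmetric : ∀ X Y Z, act X (g Y Z) = g (nabla X Y) Z + g Y (nabla X Z)

namespace MWPF

variable {C V} {p : ℕ} (s : MWPF C V p)

/-- The fundamental 2-form `Φ(X,Y) = g(X, fY)`. -/
def Phi (X Y : V) : C := s.g X (s.f Y)

/-- `dη^i(X,Y) = (1/2)(X(η^i Y) - Y(η^i X) - η^i [X,Y])`. -/
def dEta (i : Fin p) (X Y : V) : C :=
  (2⁻¹ : ℝ) • (s.act X (s.η i Y) - s.act Y (s.η i X) - s.η i (s.b X Y))

/-- The Nijenhuis torsion `[f,f]`. -/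
def Nij (X Y : V) : V :=
  s.f (s.f (s.b X Y)) + s.b (s.f X) (s.f Y) - s.f (s.b (s.f X) Y) - s.f (s.b X (s.f Y))

/-- `N^(1)(X,Y) = [f,f](X,Y) - 2 Σ_i dη^i(X,Y) ξ_i`. -/
def N1 (X Y : V) : V := s.Nij X Y - (2 : ℝ) • ∑ i, s.dEta i X Y • s.ξ i

/-- The difference tensor `Q̃ = Q - id`. -/
def Qt (X : V) : V := s.Q X - X

/-- The Lie derivative of `f`: `(£_Z f)X = [Z, fX] - f[Z,X]`. -/
def Lief (Z X : V) : V := s.b Z (s.f X) - s.f (s.b Z X)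

/-- The Lie derivative of `g`: `(£_Z g)(X,Y) = Z(g(X,Y)) - g([Z,X],Y) - g(X,[Z,Y])`. -/
def Lieg (Z X Y : V) : C := s.act Z (s.g X Y) - s.g (s.b Z X) Y - s.g X (s.b Z Y)

/-- `N^(2)_i(X,Y) = (£_{fX} η^i)Y - (£_{fY} η^i)X`. -/
def N2 (i : Fin p) (X Y : V) : C :=
  (s.act (s.f X) (s.η i Y) - s.η i (s.b (s.f X) Y))
    - (s.act (s.f Y) (s.η i X) - s.η i (s.b (s.f Y) X))

/-- The exterior differential of the fundamental 2-form. -/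
def dPhi (X Y Z : V) : C := (3⁻¹ : ℝ) •
  (s.act X (s.Phi Y Z) + s.act Y (s.Phi Z X) + s.act Z (s.Phi X Y)
    - s.Phi (s.b X Y) Z - s.Phi (s.b Z X) Y - s.Phi (s.b Y Z) X)

/-- The tensor `h_i = (1/2) £_{ξ_i} f`. -/
def hmap (i : Fin p) (X : V) : V := (2⁻¹ : ℝ) • s.Lief (s.ξ i) X

/-- The tensor `N^(5)`. -/
def N5 (X Y Z : V) : C :=
  s.act (s.f Z) (s.g X (s.Qt Y)) - s.act (s.f Y) (s.g X (s.Qt Z))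
    + s.g (s.b X (s.f Z)) (s.Qt Y) - s.g (s.b X (s.f Y)) (s.Qt Z)
    + s.g (s.b Y (s.f Z) - s.b Z (s.f Y) - s.f (s.b Y Z)) (s.Qt X)

/-- The curvature tensor of `nabla`. -/
def Rm (X Y Z : V) : V :=
  s.nabla X (s.nabla Y Z) - s.nabla Y (s.nabla X Z) - s.nabla (s.b X Y) Z

end MWPF

/-! `dη^i = Φ` and normality give `£_{ξ_i} η^j = 0`, `[ξ_i, ξ_j] = 0` and `£_{ξ_i} f = 0`.
Since `£_{ξ_i}` commutes with `d`, `£_{ξ_i} Φ = £_{ξ_i} dη^i = d £_{ξ_i} η^i = 0`, and with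
`£_{ξ_i} f = 0` this is `(£_{ξ_i} g)(X, fY) = 0`. Also `(£_{ξ_i} g)(X, ξ_j) = 0`, and
`Q Y = f² Y + Σ_k η^k(Y) ξ_k` with `Q` onto, so `ξ_i` is Killing.
For the Levi-Civita connection, `£_{ξ_i} g (X,Y) = g(∇_X ξ_i, Y) + g(X, ∇_Y ξ_i)` and
`2dη^i(X,Y) = g(∇_X ξ_i, Y) - g(∇_Y ξ_i, X)`; hence `g(∇_X ξ_i, Y) = Φ(X,Y)`, so `∇_{ξ_j} ξ_i = 0`,
and `g(∇_X Y + ∇_Y X, ξ_i) = -(£_{ξ_i} g)(X,Y) = 0` for `X, Y ⊥ ξ_i`. -/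

lemma eq_zero_of_add_self_eq_zero {M : Type*} [AddCommGroup M] [Module ℝ M] {c : M}
    (h : c + c = 0) : c = 0 := by
  rw [← two_smul ℝ c, smul_eq_zero] at h
  exact h.resolve_left two_ne_zero

namespace MWPF

section

variable {C V : Type*} [CommRing C] [AddCommGroup V] [Module C V] {p : ℕ} (s : MWPF C V p)

def actAddHom (X : V) : C →+ C := AddMonoidHom.mk' (s.act X) (s.hactadd X)

lemma act_zero (X : V) : s.act X 0 = 0 := map_zero (s.actAddHom X)

lemma act_sub (X : V) (a c : C) : s.act X (a - c) = s.act X a - s.act X c :=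
  map_sub (s.actAddHom X) a c

lemma act_one (X : V) : s.act X 1 = 0 := by
  simpa using s.hactmul X 1 1

lemma b_add_right (X Y Z : V) : s.b X (Y + Z) = s.b X Y + s.b X Z := by
  rw [s.hbskew X, s.hbaddl, s.hbskew Y, s.hbskew Z, neg_add, neg_neg, neg_neg]

def bAddHom (X : V) : V →+ V := AddMonoidHom.mk' (s.b X) (s.b_add_right X)

lemma b_zero_right (X : V) : s.b X 0 = 0 := map_zero (s.bAddHom X)

lemma b_neg_right (X Y : V) : s.b X (-Y) = -s.b X Y := map_neg (s.bAddHom X) Y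

lemma b_zero_left (X : V) : s.b 0 X = 0 := by
  rw [s.hbskew, s.b_zero_right, neg_zero]

lemma leibniz_b (X Y Z : V) : s.b X (s.b Y Z) = s.b (s.b X Y) Z + s.b Y (s.b X Z) := by
  have h := s.hjacobi X Y Z
  rw [s.hbskew Z X, s.b_neg_right, s.hbskew Z (s.b X Y)] at h
  linear_combination (norm := module) h

lemma eta_f (i : Fin p) (X : V) : s.η i (s.f X) = 0 :=
  (s.hrange (s.f X)).mp ⟨X, rfl⟩ i

lemma act_eta_xi (X : V) (i j : Fin p) : s.act X (s.η i (s.ξ j)) = 0 := by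
  rw [s.hetaxi]
  split_ifs
  · exact s.act_one X
  · exact s.act_zero X

lemma eq_zero_of_f_f_eq_zero {Z : V} (hη : ∀ k, s.η k Z = 0) (hff : s.f (s.f Z) = 0) :
    Z = 0 := by
  rw [s.hf2] at hff
  simp only [hη, zero_smul, Finset.sum_const_zero, sub_zero] at hff
  exact s.hQbij.1 (by rw [hff, map_zero])

lemma f_xi (j : Fin p) : s.f (s.ξ j) = 0 := by
  refine s.eq_zero_of_f_f_eq_zero (fun k => s.eta_f k _) ?_
  have hsum : ∑ i, s.η i (s.ξ j) • s.ξ i = s.ξ j := by simp [s.hetaxi, ite_smul]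
  rw [s.hf2 (s.ξ j), s.hQxi, hsum, sub_self, map_zero]

lemma g_xi_eq_eta (j : Fin p) : s.g (s.ξ j) = s.η j := by
  ext X
  have h := s.hgcompat X (s.ξ j)
  simp only [s.f_xi, map_zero, s.hQxi, s.hetaxi, mul_ite, mul_one, mul_zero,
    Finset.sum_ite_eq', Finset.mem_univ, if_true] at h
  rw [s.hgsymm]
  linear_combination h

lemma g_xi (X : V) (j : Fin p) : s.g X (s.ξ j) = s.η j X := by
  rw [s.hgsymm, s.g_xi_eq_eta]

/-- Not an axiom of the model: it follows from the Jacobi identity for `X, Y, c • ξ i`, read off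
through `η i (ξ i) = 1`. -/
lemma act_b (i : Fin p) (X Y : V) (c : C) :
    s.act (s.b X Y) c = s.act X (s.act Y c) - s.act Y (s.act X c) := by
  have key : (s.act X (s.act Y c) - s.act Y (s.act X c) - s.act (s.b X Y) c) • s.ξ i = 0 := by
    have h₁ := s.hjacobi X Y (c • s.ξ i)
    have h₂ := s.hjacobi X Y (s.ξ i)
    rw [s.hbskew (c • s.ξ i) X, s.hbskew (c • s.ξ i) (s.b X Y)] at h₁
    rw [s.hbskew (s.ξ i) X, s.hbskew (s.ξ i) (s.b X Y)] at h₂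
    simp only [s.hbleib, s.b_add_right, s.b_neg_right] at h₁ h₂
    linear_combination (norm := module) h₁ - c • h₂
  have h := congrArg (s.η i) key
  rw [map_smul, map_zero, smul_eq_mul, s.hetaxi, if_pos rfl, mul_one, sub_eq_zero] at h
  exact h.symm

def dForm (θ : V →ₗ[C] C) (X Y : V) : C :=
  s.act X (θ Y) - s.act Y (θ X) - θ (s.b X Y)

def lieForm (Z : V) (ω : V → V → C) (X Y : V) : C :=
  s.act Z (ω X Y) - ω (s.b Z X) Y - ω X (s.b Z Y)

lemma lieForm_dForm_eq_zero (i : Fin p) (θ : V →ₗ[C] C)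
    (hθ : ∀ X, s.act (s.ξ i) (θ X) = θ (s.b (s.ξ i) X)) (X Y : V) :
    s.lieForm (s.ξ i) (s.dForm θ) X Y = 0 := by
  have hθX := hθ X
  have hθY := hθ Y
  have hθXY := hθ (s.b X Y)
  have hJacobi := congrArg θ (s.leibniz_b (s.ξ i) X Y)
  have hX := s.act_b i (s.ξ i) X (θ Y)
  have hY := s.act_b i (s.ξ i) Y (θ X)
  rw [map_add] at hJacobi
  simp only [lieForm, dForm, s.act_sub, ← hθX, ← hθY]
  linear_combination -hθXY - hJacobi - hX + hY

def liegRight (Z X : V) : V →ₗ[C] C where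
  toFun := s.Lieg Z X
  map_add' Y₁ Y₂ := by
    simp only [Lieg, map_add, s.b_add_right, s.hactadd]
    ring
  map_smul' c Y := by
    simp only [Lieg, map_smul, smul_eq_mul, s.hbleib, s.hactmul, map_add, RingHom.id_apply]
    ring

lemma lieg_eq_g_nabla (Z X Y : V) :
    s.Lieg Z X Y = s.g (s.nabla X Z) Y + s.g X (s.nabla Y Z) := by
  rw [Lieg, s.hmetric, ← s.htors Z X, ← s.htors Z Y]
  simp only [map_sub, LinearMap.sub_apply]
  ring

lemma dForm_g (Z X Y : V) :
    s.dForm (s.g Z) X Y = s.g (s.nabla X Z) Y - s.g (s.nabla Y Z) X := by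
  rw [dForm, s.hmetric, s.hmetric, ← s.htors, map_sub, s.hgsymm Z (s.nabla X Y),
    s.hgsymm Z (s.nabla Y X)]
  ring

lemma g_nabla_add_nabla (Z X Y : V) (hX : s.g X Z = 0) (hY : s.g Y Z = 0) :
    s.g (s.nabla X Y + s.nabla Y X) Z = -s.Lieg Z X Y := by
  have h₁ := s.hmetric X Y Z
  have h₂ := s.hmetric Y X Z
  rw [hY, s.act_zero, s.hgsymm Y (s.nabla X Z)] at h₁
  rw [hX, s.act_zero] at h₂
  rw [s.lieg_eq_g_nabla, map_add, LinearMap.add_apply]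
  linear_combination -h₁ - h₂

end

section

variable {C V : Type*} [CommRing C] [Algebra ℝ C] [AddCommGroup V] [Module C V]
  {p : ℕ} (s : MWPF C V p) (hS : ∀ (i : Fin p) (X Y : V), s.dEta i X Y = s.Phi X Y)
include hS

lemma dForm_eta (i : Fin p) (X Y : V) : s.dForm (s.η i) X Y = s.Phi X Y + s.Phi X Y := by
  rw [← hS i, dEta, ← two_smul ℝ, smul_smul]
  norm_num [dForm]

lemma act_xi_eta (i j : Fin p) (X : V) : s.act (s.ξ j) (s.η i X) = s.η i (s.b (s.ξ j) X) := by
  have h := s.dForm_eta hS i (s.ξ j) X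
  rw [dForm, Phi, s.g_xi_eq_eta, s.eta_f, s.act_eta_xi] at h
  linear_combination h

variable [Module ℝ V] (hN : ∀ X Y, s.N1 X Y = 0)
include hN

lemma b_xi_xi (i j : Fin p) : s.b (s.ξ i) (s.ξ j) = 0 := by
  have hn := hN (s.ξ i) (s.ξ j)
  simp only [N1, Nij, hS, Phi, s.f_xi, map_zero, zero_smul, Finset.sum_const_zero, smul_zero,
    s.b_zero_left, s.b_zero_right, add_zero, sub_zero] at hn
  refine s.eq_zero_of_f_f_eq_zero (fun k => ?_) hn
  rw [← s.act_xi_eta hS, s.act_eta_xi]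

lemma b_xi_f (i : Fin p) (X : V) : s.b (s.ξ i) (s.f X) = s.f (s.b (s.ξ i) X) := by
  have hn := hN (s.ξ i) X
  simp only [N1, Nij, hS, Phi, s.g_xi_eq_eta, s.eta_f, s.f_xi, map_zero, zero_smul,
    Finset.sum_const_zero, smul_zero, s.b_zero_left, add_zero, sub_zero] at hn
  rw [← sub_eq_zero]
  refine s.eq_zero_of_f_f_eq_zero (fun k => ?_) ?_
  · rw [map_sub, s.eta_f, sub_zero, ← s.act_xi_eta hS, s.eta_f, s.act_zero]
  · rw [map_sub s.f, ← neg_sub, hn, neg_zero, map_zero]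

lemma lieg_xi_f (i : Fin p) (X Y : V) : s.Lieg (s.ξ i) X (s.f Y) = 0 := by
  have h := s.lieForm_dForm_eq_zero i (s.η i) (s.act_xi_eta hS i i) X Y
  simp only [lieForm, s.dForm_eta hS, Phi, s.hactadd, ← s.b_xi_f hS hN] at h
  exact eq_zero_of_add_self_eq_zero (by rw [Lieg]; linear_combination h)

lemma lieg_xi_xi (i k : Fin p) (X : V) : s.Lieg (s.ξ i) X (s.ξ k) = 0 := by
  rw [Lieg, s.g_xi, s.g_xi, s.b_xi_xi hS hN, map_zero, s.act_xi_eta hS, sub_self, sub_zero]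

lemma lieg_xi (i : Fin p) (X Y : V) : s.Lieg (s.ξ i) X Y = 0 := by
  obtain ⟨Y, rfl⟩ := s.hQbij.2 Y
  change s.liegRight (s.ξ i) X (s.Q Y) = 0
  rw [sub_eq_iff_eq_add.mp (s.hf2 Y).symm, map_add, map_sum]
  simp [liegRight, s.lieg_xi_f hS hN, s.lieg_xi_xi hS hN]

lemma g_nabla_xi (i : Fin p) (X Y : V) : s.g (s.nabla X (s.ξ i)) Y = s.g X (s.f Y) := by
  have hd := s.dForm_g (s.ξ i) X Y
  have hk := s.lieg_eq_g_nabla (s.ξ i) X Y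
  rw [s.g_xi_eq_eta, s.dForm_eta hS, Phi] at hd
  rw [s.lieg_xi hS hN, s.hgsymm X] at hk
  rw [← sub_eq_zero]
  exact eq_zero_of_add_self_eq_zero (by linear_combination -hk - hd)

lemma nabla_xi_xi (i j : Fin p) : s.nabla (s.ξ j) (s.ξ i) = 0 :=
  s.hgnondeg _ fun Y => by rw [s.g_nabla_xi hS hN, s.g_xi_eq_eta, s.eta_f]

end

end MWPF

theorem paraS_Killing_foliation_general {C V : Type*} [CommRing C] [Algebra ℝ C] [AddCommGroup V]
    [Module ℝ V] [Module C V] {p : ℕ} (s : MWPF C V p)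
    (hN : ∀ X Y, s.N1 X Y = 0)
    (hS : ∀ (i : Fin p) (X Y : V), s.dEta i X Y = s.Phi X Y) :
    (∀ (i : Fin p) (X Y : V), s.Lieg (s.ξ i) X Y = 0) ∧
    (∀ i j : Fin p, s.b (s.ξ i) (s.ξ j) ∈ Submodule.span C (Set.range s.ξ)) ∧
    (∀ i j : Fin p,
      s.nabla (s.ξ i) (s.ξ j) + s.nabla (s.ξ j) (s.ξ i)
        ∈ Submodule.span C (Set.range s.ξ)) ∧
    (∀ X Y : V, (∀ k, s.η k X = 0) → (∀ k, s.η k Y = 0) →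
      ∀ i : Fin p, s.g (s.nabla X Y + s.nabla Y X) (s.ξ i) = 0) := by
  refine ⟨s.lieg_xi hS hN, fun i j => ?_, fun i j => ?_, fun X Y hX hY i => ?_⟩
  · rw [s.b_xi_xi hS hN]
    exact zero_mem _
  · rw [s.nabla_xi_xi hS hN, s.nabla_xi_xi hS hN, add_zero]
    exact zero_mem _
  · rw [s.g_nabla_add_nabla _ _ _ (by rw [s.g_xi, hX]) (by rw [s.g_xi, hY]), s.lieg_xi hS hN,
      neg_zero]

/-- on a weak para-S-manifold (normal, `dη^i = Φ`), every `ξ_i` is Killing,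
`ker f` is integrable, and both `ker f` and `f(TM)` are totally geodesic; thus `ker f`
defines a Riemannian totally geodesic foliation. -/
theorem paraS_Killing_foliation {C V : Type*} [CommRing C] [Algebra ℝ C] [AddCommGroup V]
    [Module ℝ V] [Module C V] [IsScalarTower ℝ C V] {p : ℕ} (s : MWPF C V p)
    (hN : ∀ X Y, s.N1 X Y = 0)
    (hS : ∀ (i : Fin p) (X Y : V), s.dEta i X Y = s.Phi X Y) :
    (∀ (i : Fin p) (X Y : V), s.Lieg (s.ξ i) X Y = 0) ∧
    (∀ i j : Fin p, s.b (s.ξ i) (s.ξ j) ∈ Submodule.span C (Set.range s.ξ)) ∧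
    (∀ i j : Fin p,
      s.nabla (s.ξ i) (s.ξ j) + s.nabla (s.ξ j) (s.ξ i)
        ∈ Submodule.span C (Set.range s.ξ)) ∧
    (∀ X Y : V, (∀ k, s.η k X = 0) → (∀ k, s.η k Y = 0) →
      ∀ i : Fin p, s.g (s.nabla X Y + s.nabla Y X) (s.ξ i) = 0) :=
  paraS_Killing_foliation_general s hN hS
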